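/- arXiv:2008.00496 — 2 statements merged into one kernel-verified Lean document; each statement's English description precedes it below -/
import Mathlib

section
/- Let G_s = (V, E_s) be a directed graph with |V| ≥ 3 such that G_s is 2-vertex-connected as a directed graph (it is strongly connected and has no strong articulation points) and the underlying undirected graph of G_s is 3-vertex-connected. Then G_s is 2-vertex strongly biconnected: for every vertex w ∈ V, the induced subgraph of G_s on V \ {w} is strongly connected and its underlying undirected graph is biconnected. -/
/-- Reachability inside the vertex set `S` along the relation `R`
    (all intermediate vertices must lie in `S`). -/
def ReachOn {V : Type*} (R : V → V → Prop) (S : Set V) : V → V → Prop :=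
  Relation.ReflTransGen (fun a b => R a b ∧ a ∈ S ∧ b ∈ S)

/-- The subgraph of the directed graph `(V, E)` induced on `S` is strongly
    connected: every vertex of `S` reaches every vertex of `S` by a directed
    path staying inside `S`. -/
def StronglyConnectedOn {V : Type*} (E : Set (V × V)) (S : Set V) : Prop :=
  ∀ u ∈ S, ∀ v ∈ S, ReachOn (fun a b => (a, b) ∈ E) S u v

/-- The subgraph of the underlying undirected graph of `(V, E)` induced on `S`
    is connected. -/
def UndirConnectedOn {V : Type*} (E : Set (V × V)) (S : Set V) : Prop :=
  ∀ u ∈ S, ∀ v ∈ S, ReachOn (fun a b => (a, b) ∈ E ∨ (b, a) ∈ E) S u v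

/-- The subgraph of the underlying undirected graph of `(V, E)` induced on `S`
    is biconnected: it has at least `3` vertices and the removal of any single
    vertex leaves a connected graph. -/
def BiconnectedOn {V : Type*} (E : Set (V × V)) (S : Set V) : Prop :=
  3 ≤ S.ncard ∧ ∀ x ∈ S, UndirConnectedOn E (S \ {x})

/-- The subgraph of the directed graph `(V, E)` induced on `S` is strongly
    biconnected: it is strongly connected and its underlying undirected graph
    is biconnected. -/
def StronglyBiconnectedOn {V : Type*} (E : Set (V × V)) (S : Set V) : Prop :=
  StronglyConnectedOn E S ∧ BiconnectedOn E S

/-- `C` is a strongly biconnected component of the directed graph `(V, E)`: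
    a maximal vertex subset inducing a strongly biconnected subgraph. -/
def IsSBComponent {V : Type*} (E : Set (V × V)) (C : Set V) : Prop :=
  StronglyBiconnectedOn E C ∧
    ∀ D : Set V, C ⊆ D → StronglyBiconnectedOn E D → D ⊆ C

/-- The directed graph `(V, E)` is `2`-vertex strongly biconnected: it has at
    least `3` vertices, it is strongly biconnected, and the removal of any
    single vertex leaves a strongly biconnected graph. -/
def TwoVertexStronglyBiconnected (V : Type*) [Fintype V] (E : Set (V × V)) : Prop :=
  3 ≤ Fintype.card V ∧ StronglyBiconnectedOn E (Set.univ : Set V) ∧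
    ∀ x : V, StronglyBiconnectedOn E ((Set.univ : Set V) \ {x})

/-- The directed graph `(V, E)` is `2`-vertex-connected: it has at least `3`
    vertices, it is strongly connected, and the removal of any single vertex
    leaves a strongly connected graph (no strong articulation points). -/
def TwoVertexConnectedDir (V : Type*) [Fintype V] (E : Set (V × V)) : Prop :=
  3 ≤ Fintype.card V ∧ StronglyConnectedOn E (Set.univ : Set V) ∧
    ∀ x : V, StronglyConnectedOn E ((Set.univ : Set V) \ {x})

/-- The underlying undirected graph of the directed graph `(V, E)` is
    `3`-vertex-connected: it has more than `3` vertices and the removal of any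
    set of fewer than `3` vertices leaves a connected graph. -/
def UnderlyingThreeVertexConnected (V : Type*) [Fintype V] (E : Set (V × V)) : Prop :=
  3 < Fintype.card V ∧
    ∀ L : Set V, L.ncard < 3 → UndirConnectedOn E ((Set.univ : Set V) \ L)

/-- Let `G_s = (V, Es)` be a directed graph with `|V| ≥ 3`
such that `G_s` is `2`-vertex-connected as a directed graph (it is strongly
connected and has no strong articulation points) and the underlying undirected
graph of `G_s` is `3`-vertex-connected.  Then `G_s` is `2`-vertex strongly
biconnected: for every vertex `w ∈ V`, the induced subgraph of `G_s` on
`V \ {w}` is strongly connected and its underlying undirected graph is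
biconnected. -/
theorem stmt5 {V : Type*} [Fintype V] (Es : Set (V × V))
    (hcard : 3 ≤ Fintype.card V)
    (h2vc : TwoVertexConnectedDir V Es)
    (h3vc : UnderlyingThreeVertexConnected V Es) :
    TwoVertexStronglyBiconnected V Es ∧
      ∀ w : V, StronglyConnectedOn Es ((Set.univ : Set V) \ {w}) ∧
        BiconnectedOn Es ((Set.univ : Set V) \ {w}) := by
  obtain ⟨_, hsc, hscx⟩ := h2vc
  obtain ⟨hcard4, hund⟩ := h3vc
  have hncard_univ : (Set.univ : Set V).ncard = Fintype.card V := by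
    simp [Set.ncard_univ, Nat.card_eq_fintype_card]
  have hfin : ∀ S : Set V, S.Finite := fun S => S.toFinite
  have hncard_diff : ∀ w : V, ((Set.univ : Set V) \ {w}).ncard = Fintype.card V - 1 := by
    intro w
    rw [Set.ncard_diff_singleton_of_mem (Set.mem_univ w), hncard_univ]
  have hBicUniv : BiconnectedOn Es (Set.univ : Set V) := by
    refine ⟨by rw [hncard_univ]; exact hcard, ?_⟩
    intro x _
    have := hund {x} (by simp)
    exact this
  have hBicDiff : ∀ w : V, BiconnectedOn Es ((Set.univ : Set V) \ {w}) := by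
    intro w
    refine ⟨by rw [hncard_diff w]; omega, ?_⟩
    intro x hx
    have heq : ((Set.univ : Set V) \ {w}) \ {x} = (Set.univ : Set V) \ ({w, x} : Set V) := by
      ext y; simp [and_comm]
    rw [heq]
    apply hund
    have : ({w, x} : Set V).ncard ≤ 2 := by
      calc ({w, x} : Set V).ncard = (insert w ({x} : Set V)).ncard := rfl
        _ ≤ ({x} : Set V).ncard + 1 := Set.ncard_insert_le _ _
        _ = 2 := by simp
    omega
  refine ⟨⟨hcard, ⟨hsc, hBicUniv⟩, fun x => ⟨hscx x, hBicDiff x⟩⟩, fun w => ⟨hscx w, hBicDiff w⟩⟩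
end

section
/- Let G = (V, E) be a 2-vertex strongly biconnected directed graph, let G_1 = (V, L) be a minimal 2-vertex-connected spanning subgraph of G, and let G_2 = (V, U) be a minimal 3-vertex-connected spanning subgraph of the underlying undirected graph of G. Let A = { (v, w) ∈ E : the undirected edge {v, w} belongs to U }. Then the directed spanning subgraph G_s = (V, L ∪ A) is 2-vertex strongly biconnected. -/
/-- The edge set of the underlying undirected graph of the directed graph
    `(V, E)`, as unordered pairs of vertices. -/
def underlyingEdges {V : Type*} (E : Set (V × V)) : Set (Sym2 V) :=
  {e | ∃ v w : V, e = s(v, w) ∧ (v, w) ∈ E}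

/-- The subgraph of the undirected graph `(V, U)` (edges given as unordered
    pairs) induced on `S` is connected. -/
def SymConnectedOn {V : Type*} (U : Set (Sym2 V)) (S : Set V) : Prop :=
  ∀ u ∈ S, ∀ v ∈ S, ReachOn (fun a b => s(a, b) ∈ U) S u v

/-- The undirected graph `(V, U)` is `3`-vertex-connected: it has more than
    `3` vertices and the removal of any set of fewer than `3` vertices leaves
    a connected graph. -/
def SymThreeVertexConnected (V : Type*) [Fintype V] (U : Set (Sym2 V)) : Prop :=
  3 < Fintype.card V ∧
    ∀ L : Set V, L.ncard < 3 → SymConnectedOn U ((Set.univ : Set V) \ L)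

/-- `(V, L)` is a minimal `2`-vertex-connected spanning subgraph of the
    directed graph `(V, E)`: `L ⊆ E`, `(V, L)` is `2`-vertex-connected, and
    removing any edge of `L` destroys `2`-vertex-connectivity. -/
def MinimalTwoVertexConnectedSpanning (V : Type*) [Fintype V]
    (E L : Set (V × V)) : Prop :=
  L ⊆ E ∧ TwoVertexConnectedDir V L ∧
    ∀ e ∈ L, ¬ TwoVertexConnectedDir V (L \ {e})

/-- `(V, U)` is a minimal `3`-vertex-connected spanning subgraph of the
    underlying undirected graph of the directed graph `(V, E)`: `U` is a set
    of underlying edges of `E`, `(V, U)` is `3`-vertex-connected, and removing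
    any edge of `U` destroys `3`-vertex-connectivity. -/
def MinimalThreeVertexConnectedSpanning (V : Type*) [Fintype V]
    (E : Set (V × V)) (U : Set (Sym2 V)) : Prop :=
  U ⊆ underlyingEdges E ∧ SymThreeVertexConnected V U ∧
    ∀ e ∈ U, ¬ SymThreeVertexConnected V (U \ {e})

theorem ReachOn.mono {V : Type*} {R R' : V → V → Prop} {S : Set V}
    (h : ∀ a b, R a b → R' a b) {u v : V} (hr : ReachOn R S u v) :
    ReachOn R' S u v :=
  Relation.ReflTransGen.mono (fun a b hab => ⟨h a b hab.1, hab.2⟩) u v hr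

theorem StronglyConnectedOn.mono {V : Type*} {E E' : Set (V × V)} {S : Set V}
    (hE : E ⊆ E') (h : StronglyConnectedOn E S) : StronglyConnectedOn E' S :=
  fun u hu v hv => (h u hu v hv).mono fun _ _ hab => hE hab

theorem StronglyConnectedOn.undirConnectedOn {V : Type*} {E : Set (V × V)} {S : Set V}
    (h : StronglyConnectedOn E S) : UndirConnectedOn E S :=
  fun u hu v hv => (h u hu v hv).mono fun _ _ => Or.inl

theorem TwoVertexConnectedDir.mono {V : Type*} [Fintype V] {E E' : Set (V × V)}
    (hE : E ⊆ E') (h : TwoVertexConnectedDir V E) : TwoVertexConnectedDir V E' :=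
  ⟨h.1, h.2.1.mono hE, fun x => (h.2.2 x).mono hE⟩

theorem SymConnectedOn.undirConnectedOn {V : Type*} {U : Set (Sym2 V)} {E : Set (V × V)}
    {S : Set V} (hUE : ∀ a b, s(a, b) ∈ U → (a, b) ∈ E ∨ (b, a) ∈ E)
    (h : SymConnectedOn U S) : UndirConnectedOn E S :=
  fun u hu v hv => (h u hu v hv).mono hUE

theorem SymThreeVertexConnected.symConnectedOn_diff_diff {V : Type*} [Fintype V]
    {U : Set (Sym2 V)} (h : SymThreeVertexConnected V U) (x y : V) :
    SymConnectedOn U ((Set.univ \ {x}) \ {y}) := by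
  rw [Set.sdiff_sdiff, Set.singleton_union]
  refine h.2 _ ((Set.ncard_insert_le x {y}).trans_lt ?_)
  rw [Set.ncard_singleton]
  norm_num

theorem mem_or_swap_mem_orientation {V : Type*} {E : Set (V × V)} {U : Set (Sym2 V)}
    (hU : U ⊆ underlyingEdges E) {a b : V} (hab : s(a, b) ∈ U) :
    (a, b) ∈ {p : V × V | p ∈ E ∧ s(p.1, p.2) ∈ U} ∨
      (b, a) ∈ {p : V × V | p ∈ E ∧ s(p.1, p.2) ∈ U} := by
  obtain ⟨v, w, hvw, hE⟩ := hU hab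
  rcases Sym2.eq_iff.mp hvw with ⟨rfl, rfl⟩ | ⟨rfl, rfl⟩
  · exact Or.inl ⟨hE, hab⟩
  · exact Or.inr ⟨hE, Sym2.eq_swap ▸ hab⟩

theorem TwoVertexConnectedDir.twoVertexStronglyBiconnected {V : Type*} [Fintype V]
    {E : Set (V × V)} (h : TwoVertexConnectedDir V E) (hcard : 3 < Fintype.card V)
    (hpair : ∀ x y : V, UndirConnectedOn E ((Set.univ \ {x}) \ {y})) :
    TwoVertexStronglyBiconnected V E := by
  obtain ⟨hcard3, hsc, hsc_del⟩ := h
  refine ⟨hcard3, ⟨hsc, ?_, fun x _ => (hsc_del x).undirConnectedOn⟩,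
    fun x => ⟨hsc_del x, ?_, fun y _ => hpair x y⟩⟩
  · rwa [Set.ncard_univ, Nat.card_eq_fintype_card]
  · rw [Set.ncard_sdiff (Set.subset_univ _), Set.ncard_univ, Nat.card_eq_fintype_card,
      Set.ncard_singleton]
    omega

theorem stmt6_general {V : Type*} [Fintype V] (E L : Set (V × V)) (U : Set (Sym2 V))
    (A : Set (V × V))
    (hL : MinimalTwoVertexConnectedSpanning V E L)
    (hU : MinimalThreeVertexConnectedSpanning V E U)
    (hA : A = {p : V × V | p ∈ E ∧ s(p.1, p.2) ∈ U}) :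
    TwoVertexStronglyBiconnected V (L ∪ A) := by
  obtain ⟨-, hL2, -⟩ := hL
  obtain ⟨hUE, hU3, -⟩ := hU
  have hUA : ∀ a b, s(a, b) ∈ U → (a, b) ∈ L ∪ A ∨ (b, a) ∈ L ∪ A := fun a b hab =>
    (hA ▸ mem_or_swap_mem_orientation hUE hab).imp Or.inr Or.inr
  exact (hL2.mono Set.subset_union_left).twoVertexStronglyBiconnected hU3.1
    fun x y => (hU3.symConnectedOn_diff_diff x y).undirConnectedOn hUA

/-- Let `G = (V, E)` be a `2`-vertex strongly biconnected
directed graph, let `G₁ = (V, L)` be a minimal `2`-vertex-connected spanning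
subgraph of `G`, and let `G₂ = (V, U)` be a minimal `3`-vertex-connected
spanning subgraph of the underlying undirected graph of `G`.  Let
`A = {(v, w) ∈ E : the undirected edge {v, w} belongs to U}`.  Then the
directed spanning subgraph `G_s = (V, L ∪ A)` is `2`-vertex strongly
biconnected. -/
theorem stmt6 {V : Type*} [Fintype V] (E L : Set (V × V)) (U : Set (Sym2 V))
    (A : Set (V × V))
    (hG : TwoVertexStronglyBiconnected V E)
    (hL : MinimalTwoVertexConnectedSpanning V E L)
    (hU : MinimalThreeVertexConnectedSpanning V E U)
    (hA : A = {p : V × V | p ∈ E ∧ s(p.1, p.2) ∈ U}) :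
    TwoVertexStronglyBiconnected V (L ∪ A) :=
  stmt6_general E L U A hL hU hA
end
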